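/- arXiv:1312.3913 — 4 statements merged into one kernel-verified Lean document; each statement's English description precedes it below -/
import Mathlib

section
/- Sequential composition for Blowfish privacy: If mechanism M1 satisfies (ε1,P)-Blowfish privacy and mechanism M2 (taking the output of M1 as an auxiliary input) satisfies (ε2,P)-Blowfish privacy with independent randomness, then the mechanism that outputs (M1(D), M2(M1(D), D)) satisfies (ε1+ε2, P)-Blowfish privacy. -/
/-- `(ε,P)`-Blowfish privacy: `N` is the neighbor relation determined by policy `P`. -/
def BlowfishPriv {DB Ω : Type*} (N : DB → DB → Prop) (ε : ℝ) (M : DB → PMF Ω) : Prop :=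
  ∀ D1 D2, N D1 D2 → ∀ S : Set Ω,
    (M D1).toOuterMeasure S ≤ ENNReal.ofReal (Real.exp ε) * (M D2).toOuterMeasure S

lemma blowfish_pointwise {DB Ω : Type*} {N : DB → DB → Prop} {ε : ℝ} {M : DB → PMF Ω}
    (h : BlowfishPriv N ε M) {D1 D2 : DB} (hN : N D1 D2) (a : Ω) :
    M D1 a ≤ ENNReal.ofReal (Real.exp ε) * M D2 a := by
  have := h D1 D2 hN {a}
  simpa [PMF.toOuterMeasure_apply_singleton] using this

/-- Sequential composition for Blowfish privacy. -/
theorem blowfish_sequential_composition {DB Ω1 Ω2 : Type*} (N : DB → DB → Prop) (ε1 ε2 : ℝ)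
    (M1 : DB → PMF Ω1) (M2 : Ω1 → DB → PMF Ω2)
    (h1 : BlowfishPriv N ε1 M1) (h2 : ∀ ω : Ω1, BlowfishPriv N ε2 (M2 ω)) :
    BlowfishPriv N (ε1 + ε2)
      (fun D => (M1 D).bind (fun ω => (M2 ω D).map (fun r => (ω, r)))) := by
  intro D1 D2 hN S
  simp only [PMF.toOuterMeasure_bind_apply, PMF.toOuterMeasure_map_apply]
  have key : ∀ ω : Ω1,
      M1 D1 ω * (M2 ω D1).toOuterMeasure ((fun r => (ω, r)) ⁻¹' S) ≤
      (ENNReal.ofReal (Real.exp ε1) * ENNReal.ofReal (Real.exp ε2)) *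
        (M1 D2 ω * (M2 ω D2).toOuterMeasure ((fun r => (ω, r)) ⁻¹' S)) := by
    intro ω
    have hA := blowfish_pointwise h1 hN ω
    have hB := (h2 ω) D1 D2 hN ((fun r => (ω, r)) ⁻¹' S)
    calc M1 D1 ω * (M2 ω D1).toOuterMeasure ((fun r => (ω, r)) ⁻¹' S)
        ≤ (ENNReal.ofReal (Real.exp ε1) * M1 D2 ω) *
            (ENNReal.ofReal (Real.exp ε2) * (M2 ω D2).toOuterMeasure ((fun r => (ω, r)) ⁻¹' S)) :=
          mul_le_mul' hA hB
      _ = (ENNReal.ofReal (Real.exp ε1) * ENNReal.ofReal (Real.exp ε2)) *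
            (M1 D2 ω * (M2 ω D2).toOuterMeasure ((fun r => (ω, r)) ⁻¹' S)) := by ring
  calc ∑' ω, M1 D1 ω * (M2 ω D1).toOuterMeasure ((fun r => (ω, r)) ⁻¹' S)
      ≤ ∑' ω, (ENNReal.ofReal (Real.exp ε1) * ENNReal.ofReal (Real.exp ε2)) *
          (M1 D2 ω * (M2 ω D2).toOuterMeasure ((fun r => (ω, r)) ⁻¹' S)) :=
        ENNReal.tsum_le_tsum key
    _ = ENNReal.ofReal (Real.exp (ε1 + ε2)) *
          ∑' ω, M1 D2 ω * (M2 ω D2).toOuterMeasure ((fun r => (ω, r)) ⁻¹' S) := by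
        rw [ENNReal.tsum_mul_left, Real.exp_add, ENNReal.ofReal_mul (Real.exp_nonneg _)]
end

section
/- Parallel composition for Blowfish privacy with cardinality constraint: Let S_1,...,S_p be disjoint subsets of identifiers, and suppose any two neighboring databases (D_a, D_b) ∈ N(P) differ in the tuple of exactly one identifier. If each mechanism M_i satisfies (ε_i, P)-Blowfish privacy, then the mechanism releasing the sequence (M_1(D ∩ S_1), ..., M_p(D ∩ S_p)), with independent randomness across the M_i, satisfies (max_i ε_i, P)-Blowfish privacy. -/
/-- Parallel composition for Blowfish privacy with a cardinality constraint.
Databases are indexed tuples `I → T`; `Sid i` are disjoint sets of identifiers;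
neighboring databases differ in the tuple of exactly one identifier; each
mechanism `M i`, applied to the restriction `D ∩ Sid i`, satisfies
`(ε i, P)`-Blowfish privacy.  Then releasing all of them (with independent
randomness, so the joint probability of a rectangle is the product) satisfies
`(max_i ε i, P)`-Blowfish privacy. -/
theorem blowfish_parallel_composition {I T : Type*} {p : ℕ} (hp : 0 < p)
    (Ω : Fin p → Type*) (Sid : Fin p → Set I)
    (hdisj : ∀ i j : Fin p, i ≠ j → Disjoint (Sid i) (Sid j))
    (N : (I → T) → (I → T) → Prop)
    (hone : ∀ D1 D2 : I → T, N D1 D2 → ∃! k : I, D1 k ≠ D2 k)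
    (ε : Fin p → ℝ)
    (M : ∀ i : Fin p, ((Sid i) → T) → PMF (Ω i))
    (hM : ∀ i : Fin p, ∀ D1 D2 : I → T, N D1 D2 → ∀ S : Set (Ω i),
      (M i (fun x => D1 x)).toOuterMeasure S ≤
        ENNReal.ofReal (Real.exp (ε i)) * (M i (fun x => D2 x)).toOuterMeasure S) :
    ∀ D1 D2 : I → T, N D1 D2 → ∀ Sout : ∀ i : Fin p, Set (Ω i),
      ∏ i : Fin p, (M i (fun x => D1 x)).toOuterMeasure (Sout i) ≤
        ENNReal.ofReal
            (Real.exp (Finset.univ.sup'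
              (Finset.univ_nonempty_iff.mpr (Fin.pos_iff_nonempty.mp hp)) ε)) *
          ∏ i : Fin p, (M i (fun x => D2 x)).toOuterMeasure (Sout i) := by
  intro D1 D2 hN Sout
  classical
  obtain ⟨k, hk, huniq⟩ := hone D1 D2 hN
  -- choose the special index
  set i0 : Fin p := if h : ∃ i, k ∈ Sid i then h.choose else ⟨0, hp⟩ with hi0
  have heq : ∀ i : Fin p, i ≠ i0 →
      (fun x : Sid i => D1 x) = (fun x : Sid i => D2 x) := by
    intro i hi
    funext x
    by_contra hne
    have hx : (x : I) = k := huniq x hne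
    have hkS : k ∈ Sid i := hx ▸ x.2
    have hex : ∃ j, k ∈ Sid j := ⟨i, hkS⟩
    have hk0 : k ∈ Sid i0 := by
      simp only [hi0, dif_pos hex]
      exact hex.choose_spec
    exact (hdisj i i0 hi).ne_of_mem hkS hk0 rfl
  have hεle : ε i0 ≤ Finset.univ.sup'
      (Finset.univ_nonempty_iff.mpr (Fin.pos_iff_nonempty.mp hp)) ε :=
    Finset.le_sup' ε (Finset.mem_univ i0)
  have hc : ENNReal.ofReal (Real.exp (ε i0)) ≤
      ENNReal.ofReal (Real.exp (Finset.univ.sup'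
        (Finset.univ_nonempty_iff.mpr (Fin.pos_iff_nonempty.mp hp)) ε)) :=
    ENNReal.ofReal_le_ofReal (Real.exp_le_exp.mpr hεle)
  rw [← Finset.prod_erase_mul Finset.univ _ (Finset.mem_univ i0),
    ← Finset.prod_erase_mul Finset.univ
      (fun i => (M i (fun x => D2 x)).toOuterMeasure (Sout i)) (Finset.mem_univ i0),
    mul_comm (ENNReal.ofReal _), mul_assoc]
  refine mul_le_mul' (le_of_eq (Finset.prod_congr rfl ?_)) ?_
  · intro i hi
    have : i ≠ i0 := (Finset.mem_erase.mp hi).1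
    rw [heq i this]
  · calc (M i0 (fun x => D1 x)).toOuterMeasure (Sout i0)
        ≤ ENNReal.ofReal (Real.exp (ε i0)) *
          (M i0 (fun x => D2 x)).toOuterMeasure (Sout i0) := hM i0 D1 D2 hN (Sout i0)
      _ ≤ _ := mul_le_mul' hc le_rfl
      _ = _ := mul_comm _ _
end

section
/- The policy specific global sensitivity of the cumulative histogram query under the line-graph policy is 1: for a totally ordered domain T = {x_1 < ... < x_m}, if neighbors differ in one tuple changing between adjacent values x_i and x_{i+1}, then the cumulative histogram S_T(D) = (s_1,...,s_m) with s_i = Σ_{j≤i} c(x_j) changes in exactly one coordinate by exactly 1, so its L1 sensitivity is 1. -/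
/-- Under the line-graph policy (one tuple changes between adjacent domain
values `x_i, x_{i+1}` of the totally ordered domain `Fin m`), the cumulative
histogram `s_i(D) = #{t : D t ≤ x_i}` changes by exactly 1 in L1 norm;
hence the policy specific global sensitivity of the cumulative histogram is 1. -/
theorem cumulative_histogram_line_sensitivity_one {m n : ℕ}
    (D1 D2 : Fin n → Fin m) (i0 : Fin n)
    (hadj : (D1 i0).val + 1 = (D2 i0).val ∨ (D2 i0).val + 1 = (D1 i0).val)
    (heq : ∀ j, j ≠ i0 → D1 j = D2 j) :
    ∑ i : Fin m,
      (((Finset.univ.filter (fun t => D1 t ≤ i)).card : ℤ) -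
        ((Finset.univ.filter (fun t => D2 t ≤ i)).card : ℤ)).natAbs = 1 := by
  have key : ∀ i : Fin m,
      ((Finset.univ.filter (fun t => D1 t ≤ i)).card : ℤ) -
        ((Finset.univ.filter (fun t => D2 t ≤ i)).card : ℤ)
      = (if D1 i0 ≤ i then (1:ℤ) else 0) - (if D2 i0 ≤ i then 1 else 0) := by
    intro i
    rw [Finset.card_filter, Finset.card_filter]
    push_cast
    rw [← Finset.sum_sub_distrib, Finset.sum_eq_single i0]
    · intro t _ ht; rw [heq t ht]; ring
    · simp
  simp only [key]
  rcases hadj with h | h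
  · have : ∀ i : Fin m,
        ((if D1 i0 ≤ i then (1:ℤ) else 0) - (if D2 i0 ≤ i then 1 else 0)).natAbs
        = if i = D1 i0 then 1 else 0 := by
      intro i
      simp only [Fin.le_def, Fin.ext_iff]
      split_ifs <;> simp_all <;> omega
    simp only [this]
    simp
  · have : ∀ i : Fin m,
        ((if D1 i0 ≤ i then (1:ℤ) else 0) - (if D2 i0 ≤ i then 1 else 0)).natAbs
        = if i = D2 i0 then 1 else 0 := by
      intro i
      simp only [Fin.le_def, Fin.ext_iff]
      split_ifs <;> simp_all <;> omega
    simp only [this]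
    simp
end

section
/- The policy specific global sensitivity of the cumulative histogram under the θ-threshold line policy is θ: for the totally ordered domain T = {x_1,...,x_m} with policy G^{d,θ} (one tuple changes between values x_i and x_j with |i-j| ≤ θ), the maximum L1 change in the cumulative histogram over neighboring databases equals θ (assuming θ ≤ m-1 and n ≥ 1). -/
lemma chts_key {m : ℕ} (a b : Fin m) :
    ∑ i : Fin m, ((if a ≤ i then (1:ℤ) else 0) - (if b ≤ i then 1 else 0)).natAbs
      = ((a : ℤ) - (b : ℤ)).natAbs := by
  have h1 : ∀ i : Fin m,
      ((if a ≤ i then (1:ℤ) else 0) - (if b ≤ i then 1 else 0)).natAbs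
        = if ((a:ℕ) ≤ (i:ℕ) ∧ (i:ℕ) < (b:ℕ)) ∨ ((b:ℕ) ≤ (i:ℕ) ∧ (i:ℕ) < (a:ℕ)) then 1 else 0 := by
    intro i
    simp only [Fin.le_def]
    split_ifs <;> simp_all <;> omega
  simp only [h1]
  rw [Fin.sum_univ_eq_sum_range
    (fun i => if ((a:ℕ) ≤ i ∧ i < (b:ℕ)) ∨ ((b:ℕ) ≤ i ∧ i < (a:ℕ)) then 1 else 0)]
  rw [← Finset.card_filter]
  rcases le_or_gt (a:ℕ) (b:ℕ) with h | h
  · have : (Finset.range m).filter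
        (fun i => ((a:ℕ) ≤ i ∧ i < (b:ℕ)) ∨ ((b:ℕ) ≤ i ∧ i < (a:ℕ)))
        = Finset.Ico (a:ℕ) (b:ℕ) := by
      ext i
      simp only [Finset.mem_filter, Finset.mem_range, Finset.mem_Ico]
      have := b.isLt
      omega
    rw [this, Nat.card_Ico]
    omega
  · have : (Finset.range m).filter
        (fun i => ((a:ℕ) ≤ i ∧ i < (b:ℕ)) ∨ ((b:ℕ) ≤ i ∧ i < (a:ℕ)))
        = Finset.Ico (b:ℕ) (a:ℕ) := by
      ext i
      simp only [Finset.mem_filter, Finset.mem_range, Finset.mem_Ico]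
      have := a.isLt
      omega
    rw [this, Nat.card_Ico]
    omega

lemma chts_sum {m n : ℕ} (D1 D2 : Fin n → Fin m) (idx : Fin n)
    (h : ∀ j, j ≠ idx → D1 j = D2 j) :
    ∑ i : Fin m,
        (((Finset.univ.filter (fun t => D1 t ≤ i)).card : ℤ) -
          ((Finset.univ.filter (fun t => D2 t ≤ i)).card : ℤ)).natAbs
      = ((D1 idx : ℤ) - (D2 idx : ℤ)).natAbs := by
  have hc : ∀ i : Fin m,
      ((Finset.univ.filter (fun t => D1 t ≤ i)).card : ℤ) -
        ((Finset.univ.filter (fun t => D2 t ≤ i)).card : ℤ)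
      = (if D1 idx ≤ i then (1:ℤ) else 0) - (if D2 idx ≤ i then 1 else 0) := by
    intro i
    rw [Finset.card_filter, Finset.card_filter]
    push_cast
    rw [← Finset.sum_sub_distrib]
    rw [Finset.sum_eq_single idx]
    · intro j _ hj
      rw [h j hj]
      ring
    · simp
  simp only [hc]
  exact chts_key (D1 idx) (D2 idx)

/-- The policy specific global sensitivity of the cumulative histogram under
the θ-threshold line policy `G^{d,θ}` (one tuple changes between values whose
indices differ by at most θ) over the totally ordered domain `Fin m` is
exactly θ, provided `θ ≤ m - 1` and `n ≥ 1`. -/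
theorem cumulative_histogram_threshold_sensitivity {m n θ : ℕ}
    (hm : 1 ≤ m) (hθ : θ ≤ m - 1) (hn : 1 ≤ n) :
    (∀ D1 D2 : Fin n → Fin m,
      (∃ i, (∀ j, j ≠ i → D1 j = D2 j) ∧
        (((D1 i : ℤ) - (D2 i : ℤ)).natAbs ≤ θ)) →
      ∑ i : Fin m,
        (((Finset.univ.filter (fun t => D1 t ≤ i)).card : ℤ) -
          ((Finset.univ.filter (fun t => D2 t ≤ i)).card : ℤ)).natAbs ≤ θ)
    ∧
    (∃ D1 D2 : Fin n → Fin m,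
      (∃ i, (∀ j, j ≠ i → D1 j = D2 j) ∧
        (((D1 i : ℤ) - (D2 i : ℤ)).natAbs ≤ θ)) ∧
      ∑ i : Fin m,
        (((Finset.univ.filter (fun t => D1 t ≤ i)).card : ℤ) -
          ((Finset.univ.filter (fun t => D2 t ≤ i)).card : ℤ)).natAbs = θ) := by
  constructor
  · rintro D1 D2 ⟨idx, hEq, hB⟩
    rw [chts_sum D1 D2 idx hEq]
    exact hB
  · have hθm : θ < m := by omega
    refine ⟨fun _ => ⟨0, by omega⟩, Function.update (fun _ => ⟨0, by omega⟩) ⟨0, hn⟩ ⟨θ, hθm⟩,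
      ⟨⟨0, hn⟩, ?_, ?_⟩, ?_⟩
    · intro j hj
      rw [Function.update_of_ne hj]
    · simp [Function.update_self]
    · rw [chts_sum _ _ ⟨0, hn⟩ (fun j hj => (Function.update_of_ne hj _ _).symm)]
      simp [Function.update_self]
end
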